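/- arXiv:2101.04265 — 4 statements merged into one kernel-verified Lean document; each statement's English description precedes it below -/
import Mathlib

section
/- Let G be a permutation group on Ω containing a regular dihedral subgroup D, and let Γ be a connected orbital graph of G (so Γ is a connected Cayley graph Cay(D,S) of D). Then Γ is undirected, i.e., the connection set S satisfies S = S^{-1}. -/
/-!
Let `R` be the rotation subgroup of `D`. Since `D` acts regularly and `R` is a proper subgroup,
the `R`-orbits do not cover `Ω`, so by connectedness some arc `(x, y)` leaves its `R`-orbit. The
element `d ∈ D` with `d y = x` is then a reflection, hence an involution, and it maps the arc
`(x, y)` to `(y, x)`. An orbital containing an arc together with its reverse is symmetric.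
-/

open Equiv MulAction

namespace DihedralGroup

variable {n : ℕ}

def rotations (n : ℕ) : Subgroup (DihedralGroup n) where
  carrier := Set.range r
  mul_mem' := by
    rintro _ _ ⟨i, rfl⟩ ⟨j, rfl⟩
    exact ⟨i + j, (r_mul_r i j).symm⟩
  one_mem' := ⟨0, r_zero⟩
  inv_mem' := by
    rintro _ ⟨i, rfl⟩
    exact ⟨-i, (inv_r i).symm⟩

theorem sr_notMem_rotations (i : ZMod n) : sr i ∉ rotations n := by
  rintro ⟨j, hj⟩
  cases hj

theorem mul_self_eq_one_of_notMem_rotations {g : DihedralGroup n} (hg : g ∉ rotations n) :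
    g * g = 1 := by
  cases g with
  | r i => exact absurd ⟨i, rfl⟩ hg
  | sr i => exact sr_mul_self i

end DihedralGroup

theorem Setoid.exists_rel_not_rel_of_reflTransGen {α : Type*} (s : Setoid α) {r : α → α → Prop}
    (hconn : ∀ x y, Relation.ReflTransGen (fun u v => r u v ∨ r v u) x y) {x y : α}
    (hxy : ¬ s x y) : ∃ u v, r u v ∧ ¬ s u v := by
  by_contra! hr
  refine hxy (Relation.ReflTransGen.rec (s.refl x) (fun _ huv hs => s.trans hs ?_) (hconn x y))
  rcases huv with huv | hvu
  exacts [hr _ _ huv, s.symm (hr _ _ hvu)]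

namespace MulAction

variable {D α : Type*} [Group D] [MulAction D α]

theorem exists_notMem_orbit_of_ne_top (hfree : ∀ (d : D) (x : α), d • x = x → d = 1)
    {H : Subgroup D} (hH : H ≠ ⊤) (x : α) : ∃ y, y ∉ orbit H x := by
  obtain ⟨d, hd⟩ := SetLike.exists_not_mem_of_ne_top H hH
  refine ⟨d • x, fun hdx => hd ?_⟩
  obtain ⟨h, hhx⟩ := mem_orbit_iff.mp hdx
  have hfix : (d⁻¹ * h) • x = x := by rw [mul_smul, ← Subgroup.smul_def, hhx, inv_smul_smul]
  rw [inv_mul_eq_one.mp (hfree _ x hfix)]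
  exact h.2

theorem exists_swap_of_reflTransGen [IsPretransitive D α] [Nonempty α]
    (hfree : ∀ (d : D) (x : α), d • x = x → d = 1)
    {H : Subgroup D} (hH : H ≠ ⊤) (hinvol : ∀ d ∉ H, d * d = 1) {r : α → α → Prop}
    (hconn : ∀ x y, Relation.ReflTransGen (fun u v => r u v ∨ r v u) x y) :
    ∃ (x y : α) (d : D), r x y ∧ d • x = y ∧ d • y = x := by
  obtain ⟨x₀⟩ := ‹Nonempty α›
  obtain ⟨y₀, hy₀⟩ := exists_notMem_orbit_of_ne_top hfree hH x₀
  obtain ⟨x, y, hxy, hyx⟩ :=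
    (orbitRel H α).exists_rel_not_rel_of_reflTransGen hconn (orbitRel_apply.not.mpr hy₀)
  obtain ⟨d, rfl⟩ := exists_smul_eq D y x
  have hd : d ∉ H := fun hd => hyx (orbitRel_apply.mpr ⟨⟨d, hd⟩, rfl⟩)
  refine ⟨d • y, y, d, hxy, ?_, rfl⟩
  rw [smul_smul, hinvol d hd, one_smul]

theorem swap_mem_orbit_of_swap_mem {p q : α × α} (hq : q ∈ orbit D p) (hq' : q.swap ∈ orbit D p)
    {s : α × α} (hs : s ∈ orbit D p) : s.swap ∈ orbit D p := by
  rw [← orbit_eq_iff.mpr hq] at hs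
  obtain ⟨g, rfl⟩ := hs
  rw [Prod.smul_swap]
  exact mem_orbit_of_mem_orbit g hq'

end MulAction

theorem Subgroup.orbit_prod_eq {α : Type*} (G : Subgroup (Perm α)) (a b : α) :
    orbit G (a, b) = {p | ∃ g ∈ G, p = (g a, g b)} := by
  ext p
  simp [mem_orbit_iff, eq_comm]

theorem stmt3_general {Ω : Type*} (n : ℕ)
    (G D : Subgroup (Equiv.Perm Ω)) (hDG : D ≤ G)
    (hdih : Nonempty (D ≃* DihedralGroup n))
    (htrans : ∀ x y : Ω, ∃ d ∈ D, d x = y)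
    (hfree : ∀ d ∈ D, ∀ x : Ω, d x = x → d = 1)
    (ω₁ ω₂ : Ω)
    (A : Set (Ω × Ω))
    (hA : A = {p : Ω × Ω | ∃ g ∈ G, p = (g ω₁, g ω₂)})
    (hconn : ∀ x y : Ω,
      Relation.ReflTransGen (fun u v => (u, v) ∈ A ∨ (v, u) ∈ A) x y) :
    ∀ x y : Ω, (x, y) ∈ A → (y, x) ∈ A := by
  obtain ⟨φ⟩ := hdih
  have : Nonempty Ω := ⟨ω₁⟩
  have : IsPretransitive D Ω :=
    ⟨fun x y => let ⟨d, hd, hdx⟩ := htrans x y; ⟨⟨d, hd⟩, hdx⟩⟩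
  have hR : (DihedralGroup.rotations n).comap φ.toMonoidHom ≠ ⊤ := fun h =>
    DihedralGroup.sr_notMem_rotations 0 (by simpa using h.ge (Subgroup.mem_top (φ.symm (.sr 0))))
  have hinvol : ∀ d ∉ (DihedralGroup.rotations n).comap φ.toMonoidHom, d * d = 1 := fun d hd =>
    φ.injective (by simpa using DihedralGroup.mul_self_eq_one_of_notMem_rotations hd)
  obtain ⟨x, y, d, hxy, rfl, hdy⟩ :=
    exists_swap_of_reflTransGen (fun d x h => Subtype.ext (hfree d d.2 x h)) hR hinvol hconn
  rw [← Subgroup.orbit_prod_eq] at hA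
  subst hA
  have hyx : (d • x, x) ∈ orbit G (ω₁, ω₂) := by
    have := mem_orbit_of_mem_orbit (⟨d, hDG d.2⟩ : G) hxy
    rwa [Prod.smul_mk, Subgroup.mk_smul, Subgroup.mk_smul, ← Subgroup.smul_def,
      ← Subgroup.smul_def, hdy] at this
  exact fun u v => swap_mem_orbit_of_swap_mem hxy hyx

/-- Let `G ≤ Sym(Ω)` contain a regular dihedral subgroup `D ≅ D_{2n}`,
and let `Γ` be a connected orbital graph of `G`, with arc set `A = (ω₁,ω₂)^G`.
Then `Γ` is undirected: the arc set `A` is symmetric (equivalently, under the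
identification of `Γ` with a Cayley graph `Cay(D,S)`, `S = S⁻¹`). -/
theorem stmt3 {Ω : Type*} [Finite Ω] (n : ℕ) (hn : 1 ≤ n)
    (G D : Subgroup (Equiv.Perm Ω)) (hDG : D ≤ G)
    (hdih : Nonempty (D ≃* DihedralGroup n))
    (htrans : ∀ x y : Ω, ∃ d ∈ D, d x = y)
    (hfree : ∀ d ∈ D, ∀ x : Ω, d x = x → d = 1)
    (ω₁ ω₂ : Ω) (hne : ω₁ ≠ ω₂)
    (A : Set (Ω × Ω))
    (hA : A = {p : Ω × Ω | ∃ g ∈ G, p = (g ω₁, g ω₂)})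
    (hconn : ∀ x y : Ω,
      Relation.ReflTransGen (fun u v => (u, v) ∈ A ∨ (v, u) ∈ A) x y) :
    ∀ x y : Ω, (x, y) ∈ A → (y, x) ∈ A :=
  stmt3_general n G D hDG hdih htrans hfree ω₁ ω₂ A hA hconn
end

section
/- Let q ≡ 3 (mod 4) be a prime power, G = PGL(2,q), H = [q] ⋊ Z_{(q-1)/2} a subgroup of index 2 in a Borel subgroup, and D ≅ D_{2(q+1)} a dihedral maximal subgroup of G. Then H ∩ D = 1 and |G| = |H|·|D|, hence G = DH and D acts regularly on the coset space [G : H] of size 2(q+1). -/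
/-!
`|PGL(2,q)| = q(q² - 1) = (q(q - 1)/2) · 2(q + 1)`, and for `q ≡ 3 (mod 4)` the two factors are
coprime: `q(q - 1)/2` is odd and prime to `q + 1`. So `H` and `D` meet trivially and `D` is a
complement of `H`, i.e. a set of representatives of the cosets `G/H`. A complement `K` of `H`
acts regularly on `G/H`: the stabilizer of `aH` with `a ∈ K` is `aHa⁻¹`, which meets `K = aKa⁻¹`
trivially.
-/

/-- `PGL(2,F)`: the quotient of `GL(2,F)` by its center. -/
abbrev PGLTwo (F : Type*) [Field F] :=
  Matrix.GeneralLinearGroup (Fin 2) F ⧸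
    Subgroup.center (Matrix.GeneralLinearGroup (Fin 2) F)

namespace Matrix.GeneralLinearGroup

variable {n : Type*} [Fintype n] [DecidableEq n] [Nonempty n]

theorem scalar_injective {R : Type*} [Semiring R] :
    Function.Injective (scalar n : Rˣ →* GL n R) := fun _ _ h =>
  Units.ext <| scalar_inj.mp (congrArg Units.val h)

theorem card_center (F : Type*) [Field F] [Fintype F] :
    Nat.card (Subgroup.center (GL n F)) = Fintype.card F - 1 := by
  rw [center_eq_range_scalar, ← Nat.card_congr (MonoidHom.ofInjective scalar_injective).toEquiv,
    Nat.card_units, Nat.card_eq_fintype_card]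

end Matrix.GeneralLinearGroup

theorem card_PGLTwo (F : Type*) [Field F] [Fintype F] :
    Nat.card (PGLTwo F) = Fintype.card F * (Fintype.card F ^ 2 - 1) := by
  have hGL := Subgroup.card_eq_card_quotient_mul_card_subgroup (Subgroup.center (GL (Fin 2) F))
  rw [Matrix.card_GL_field, Fin.prod_univ_two, Matrix.GeneralLinearGroup.card_center] at hGL
  have hq : 1 < Fintype.card F := Fintype.one_lt_card
  refine Nat.eq_of_mul_eq_mul_right (Nat.sub_pos_of_lt hq) (hGL.symm.trans ?_)
  obtain ⟨m, hm⟩ : ∃ m, Fintype.card F = m + 1 := ⟨_, (Nat.sub_add_cancel hq.le).symm⟩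
  simp only [hm, Fin.val_zero, Fin.val_one, pow_zero, pow_one, Nat.add_sub_cancel]
  rw [sq (m + 1), ← Nat.mul_sub_one, Nat.add_sub_cancel]
  ring

namespace Nat

theorem mul_sq_sub_one_eq (q : ℕ) : q * (q ^ 2 - 1) = q * (q - 1) / 2 * (2 * (q + 1)) := by
  rw [← mul_assoc, Nat.div_mul_cancel (Nat.even_mul_pred_self q).two_dvd, ← one_pow 2,
    Nat.sq_sub_sq, one_pow]
  ring

theorem coprime_mul_pred_div_two_of_mod_four_eq_three {q : ℕ} (h4 : q % 4 = 3) :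
    Nat.Coprime (q * (q - 1) / 2) (2 * (q + 1)) := by
  obtain ⟨k, rfl⟩ : ∃ k, q = 4 * k + 3 := ⟨q / 4, by omega⟩
  have hH : (4 * k + 3) * (4 * k + 3 - 1) / 2 = (4 * k + 3) * (2 * k + 1) := by
    rw [show 4 * k + 3 - 1 = 2 * (2 * k + 1) by omega, mul_left_comm,
      Nat.mul_div_cancel_left _ two_pos]
  rw [hH, show 2 * (4 * k + 3 + 1) = 2 ^ 3 * (k + 1) by ring, ← Nat.isCoprime_iff_coprime]
  simp only [Nat.cast_mul, Nat.cast_pow, Nat.cast_add, Nat.cast_ofNat, Nat.cast_one]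
  refine .mul_left (.mul_right (.pow_right ?_) ?_) (.mul_right (.pow_right ?_) ?_)
  · exact ⟨1, -(2 * k + 1), by ring⟩
  · exact ⟨-1, 4, by ring⟩
  · exact ⟨1, -k, by ring⟩
  · exact ⟨-1, 2, by ring⟩

end Nat

namespace Subgroup.IsComplement'

variable {G : Type*} [Group G] {H K : Subgroup G}

theorem exists_mul_eq (h : IsComplement' K H) (g : G) : ∃ k ∈ K, ∃ x ∈ H, g = k * x := by
  obtain ⟨k, hk, x, hx, rfl⟩ := Set.eq_univ_iff_forall.mp h.mul_eq g
  exact ⟨k, hk, x, hx, rfl⟩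

theorem exists_mk_eq (h : IsComplement' K H) (x : G ⧸ H) : ∃ k ∈ K, (k : G ⧸ H) = x := by
  obtain ⟨⟨k, hk⟩, hx, -⟩ := isComplement_subgroup_right_iff_existsUnique_quotientGroupMk.mp h x
  exact ⟨k, hk, hx⟩

theorem exists_smul_eq (h : IsComplement' K H) (x y : G ⧸ H) : ∃ k ∈ K, k • x = y := by
  obtain ⟨a, ha, rfl⟩ := h.exists_mk_eq x
  obtain ⟨b, hb, rfl⟩ := h.exists_mk_eq y
  refine ⟨b * a⁻¹, mul_mem hb (inv_mem ha), ?_⟩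
  rw [MulAction.Quotient.smul_mk, smul_eq_mul, inv_mul_cancel_right]

theorem eq_one_of_smul_eq (h : IsComplement' K H) {k : G} (hk : k ∈ K) {x : G ⧸ H}
    (hx : k • x = x) : k = 1 := by
  obtain ⟨a, ha, rfl⟩ := h.exists_mk_eq x
  have hH : a⁻¹ * (k * a) ∈ H := QuotientGroup.eq.mp hx.symm
  have hK : a⁻¹ * (k * a) ∈ K := mul_mem (inv_mem ha) (mul_mem hk ha)
  exact right_eq_mul.mp (inv_mul_eq_one.mp (Subgroup.disjoint_def.mp h.disjoint hK hH))

end Subgroup.IsComplement'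

theorem stmt9_general (q : ℕ) (F : Type*) [Field F] [Fintype F]
    (hq : Fintype.card F = q) (h4 : q % 4 = 3)
    (H D : Subgroup (PGLTwo F))
    (hHcard : Nat.card H = q * (q - 1) / 2)
    (hDcard : Nat.card D = 2 * (q + 1)) :
    H ⊓ D = ⊥ ∧
    Nat.card (PGLTwo F) = Nat.card H * Nat.card D ∧
    (∀ g : PGLTwo F, ∃ d ∈ D, ∃ h ∈ H, g = d * h) ∧
    Nat.card (PGLTwo F ⧸ H) = 2 * (q + 1) ∧
    (∀ x y : PGLTwo F ⧸ H, ∃ d ∈ D, d • x = y) ∧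
    (∀ d ∈ D, ∀ x : PGLTwo F ⧸ H, d • x = x → d = 1) := by
  have hG : Nat.card (PGLTwo F) = Nat.card H * Nat.card D := by
    rw [card_PGLTwo, hq, hHcard, hDcard, Nat.mul_sq_sub_one_eq]
  have hDH : D.IsComplement' H := Subgroup.isComplement'_of_coprime (by rw [mul_comm, hG])
    (by rw [hHcard, hDcard]; exact (Nat.coprime_mul_pred_div_two_of_mod_four_eq_three h4).symm)
  refine ⟨disjoint_iff.mp hDH.disjoint.symm, hG, hDH.exists_mul_eq, ?_, hDH.exists_smul_eq,
    fun d hd x => hDH.eq_one_of_smul_eq hd⟩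
  rw [← Subgroup.index_eq_card, hDH.index_eq_card, hDcard]

/-- Let `q ≡ 3 (mod 4)` be a prime power, `G = PGL(2,q)`,
`H = [q] ⋊ Z_{(q-1)/2}` a subgroup of index 2 of a Borel subgroup (so `|H| = q(q-1)/2`,
with a normal subgroup of order `q` and cyclic quotient) and `D ≅ D_{2(q+1)}` dihedral.
Then `H ∩ D = 1`, `|G| = |H|·|D|`, hence `G = DH` and `D` acts regularly on `[G : H]`,
a set of size `2(q+1)`. -/
theorem stmt9 (q : ℕ) (F : Type*) [Field F] [Fintype F]
    (hq : Fintype.card F = q) (h4 : q % 4 = 3)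
    (H D : Subgroup (PGLTwo F))
    (hHcard : Nat.card H = q * (q - 1) / 2)
    (hHstr : ∃ N : Subgroup H, N.Normal ∧ Nat.card N = q ∧
      ∃ h : H, ∀ x : H, ∃ k : ℤ, h ^ k * x⁻¹ ∈ N)
    (hDcard : Nat.card D = 2 * (q + 1))
    (hdih : Nonempty (D ≃* DihedralGroup (q + 1))) :
    H ⊓ D = ⊥ ∧
    Nat.card (PGLTwo F) = Nat.card H * Nat.card D ∧
    (∀ g : PGLTwo F, ∃ d ∈ D, ∃ h ∈ H, g = d * h) ∧
    Nat.card (PGLTwo F ⧸ H) = 2 * (q + 1) ∧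
    (∀ x y : PGLTwo F ⧸ H, ∃ d ∈ D, d • x = y) ∧
    (∀ d ∈ D, ∀ x : PGLTwo F ⧸ H, d • x = x → d = 1) :=
  stmt9_general q F hq h4 H D hHcard hDcard
end

section
/- Let G be a transitive permutation group on Ω containing a regular dihedral subgroup R, let 𝓑 be a minimal block system with |𝓑| ≥ 3 and block size |B| = 4, and suppose the kernel K of G on 𝓑 is an elementary abelian 2-group. Then R ∩ K ≅ Z₂ and G/K, acting on 𝓑, contains a regular cyclic subgroup (i.e., G^𝓑 is a c-group of degree |Ω|/4). -/
/-!
Through `R ≃* D_n` the dihedral group acts regularly on `Ω`, so the stabilizer of a block has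
order `4`, and `|Ω| = 2n ≥ 12` gives `n ∤ 4`. Every subgroup of the rotation group is normal in
`D_n`, so a rotation fixing one block fixes all of them. The kernel on the blocks is a normal
subgroup of exponent `2`: a reflection `sr i` in it would, together with its conjugate
`sr (i - 2)`, give `r (-2) ^ 2 = 1`, i.e. `n ∣ 4`; so the kernel consists of rotations of order
at most `2` and has at most two elements. A group of order `4` contains a nontrivial rotation, so
the kernel has order exactly `2`, and the block stabilizer must also contain a reflection.
Composing with it turns any element moving one block to another into a rotation doing so, so the
powers of `r 1` are transitive on the blocks.
-/

open MulAction DihedralGroup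
open scoped Pointwise

namespace DihedralGroup

variable {n : ℕ}

lemma conj_r_eq_or_eq_inv (y : DihedralGroup n) (i : ZMod n) :
    y * r i * y⁻¹ = r i ∨ y * r i * y⁻¹ = (r i)⁻¹ := by
  rcases y with j | j
  · left
    simp only [inv_r, r_mul_r]
    congr 1
    ring
  · right
    simp only [inv_r, inv_sr, sr_mul_r, sr_mul_sr]
    congr 1
    ring

instance normal_zpowers_r (i : ZMod n) : (Subgroup.zpowers (r i)).Normal where
  conj_mem u hu y := by
    obtain ⟨k, rfl⟩ := Subgroup.mem_zpowers_iff.mp hu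
    have hk : r i ^ k ∈ Subgroup.zpowers (r i) := Subgroup.zpow_mem_zpowers _ _
    rw [r_zpow] at hk ⊢
    rcases conj_r_eq_or_eq_inv y (i * k) with h | h <;> rw [h]
    · exact hk
    · exact inv_mem hk

lemma exists_r_ne_zero_mem_of_two_lt_card (H : Subgroup (DihedralGroup n))
    (hH : 2 < Nat.card H) : ∃ i ≠ 0, r i ∈ H := by
  by_contra! hrot
  have r_eq_one (i : ZMod n) (hi : r i ∈ H) : r i = 1 := by
    by_contra h
    exact hrot i (by rintro rfl; exact h r_zero) hi
  have eq_of_ne_one : ∀ x ∈ H, ∀ y ∈ H, x ≠ 1 → y ≠ 1 → x = y := by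
    rintro (i | p) hx y hy hx1 hy1
    · exact absurd (r_eq_one i hx) hx1
    rcases y with j | q
    · exact absurd (r_eq_one j hy) hy1
    have hpq := r_eq_one (q - p) (sr_mul_sr p q ▸ H.mul_mem hx hy)
    rw [one_def, r.injEq, sub_eq_zero] at hpq
    rw [hpq]
  replace hH : 2 < (H : Set (DihedralGroup n)).ncard := by
    rwa [← Nat.card_coe_set_eq]
  obtain ⟨a, ha, b, hb, c, hc, hab, hac, hbc⟩ :=
    (Set.two_lt_ncard (Set.finite_of_ncard_pos (by omega))).mp hH
  rcases eq_or_ne a 1 with rfl | ha1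
  · exact hbc (eq_of_ne_one b hb c hc (Ne.symm hab) (Ne.symm hac))
  rcases eq_or_ne b 1 with rfl | hb1
  · exact hac (eq_of_ne_one a ha c hc ha1 (Ne.symm hbc))
  · exact hab (eq_of_ne_one a ha b hb ha1 hb1)

lemma dvd_four_of_sr_mem {N : Subgroup (DihedralGroup n)} [hN : N.Normal]
    (hsq : ∀ x ∈ N, x ^ 2 = 1) {i : ZMod n} (hi : sr i ∈ N) : n ∣ 4 := by
  have hconj : sr (i - 2) ∈ N := by
    convert hN.conj_mem _ hi (r 1) using 1
    rw [inv_r, r_mul_sr, sr_mul_r]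
    congr 1
    ring
  have h := hsq _ (N.mul_mem hi hconj)
  rw [sr_mul_sr, r_pow, one_def, r.injEq] at h
  rw [← ZMod.natCast_eq_zero_iff]
  push_cast
  linear_combination -h

lemma card_le_two_of_sq_eq_one [NeZero n] (hn : ¬ n ∣ 4) (N : Subgroup (DihedralGroup n))
    [N.Normal] (hsq : ∀ x ∈ N, x ^ 2 = 1) : Nat.card N ≤ 2 := by
  have hsub : (N : Set (DihedralGroup n)) ⊆ r '' {i | 2 • i = 0} := by
    rintro (i | i) hx
    · refine ⟨i, ?_, rfl⟩
      have h := hsq _ hx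
      rw [r_pow, one_def, r.injEq] at h
      rw [Set.mem_ofPred_eq, two_nsmul, ← mul_two]
      exact_mod_cast h
    · exact absurd (dvd_four_of_sr_mem hsq hx) hn
  calc Nat.card N = (N : Set (DihedralGroup n)).ncard := (Nat.card_coe_set_eq _).symm
    _ ≤ (r '' {i : ZMod n | 2 • i = 0}).ncard := Set.ncard_le_ncard hsub
    _ ≤ {i : ZMod n | 2 • i = 0}.ncard := Set.ncard_image_le (Set.toFinite _)
    _ ≤ 2 := by
      rw [Set.ncard_eq_toFinset_card', Set.toFinset_ofPred]
      convert IsAddCyclic.card_nsmul_eq_zero_le (α := ZMod n) two_pos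

end DihedralGroup

section InvariantPartition

variable {G X : Type*} [Group G] [MulAction G X] {𝓑 : Set (Set X)} {B C : Set X}

lemma Subgroup.Normal.le_stabilizer_smul {N : Subgroup G} (hN : N.Normal) {a : X}
    (h : N ≤ stabilizer G a) (g : G) : N ≤ stabilizer G (g • a) := by
  rw [stabilizer_smul_eq_stabilizer_map_conj]
  intro x hx
  refine ⟨g⁻¹ * x * g, h (by simpa using hN.conj_mem x hx g⁻¹), ?_⟩
  simp [MulAut.conj_apply, mul_assoc]

lemma card_eq_card_of_isCancelSMul [IsPretransitive G X] [IsCancelSMul G X] (x : X) :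
    Nat.card G = Nat.card X := by
  rw [← index_stabilizer_of_transitive G x, IsCancelSMul.stabilizer_eq_bot, Subgroup.index_bot]

variable (G) in
structure IsInvariantPartition (𝓑 : Set (Set X)) : Prop where
  isPartition : Setoid.IsPartition 𝓑
  smul_mem (g : G) {B : Set X} : B ∈ 𝓑 → g • B ∈ 𝓑

variable (G) in
def blockKernel (𝓑 : Set (Set X)) : Subgroup G :=
  ⨅ B ∈ 𝓑, stabilizer G B

lemma mem_blockKernel {g : G} : g ∈ blockKernel G 𝓑 ↔ ∀ B ∈ 𝓑, g • B = B := by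
  simp [blockKernel, Subgroup.mem_iInf, mem_stabilizer_iff]

namespace IsInvariantPartition

lemma blockKernel_normal (h𝓑 : IsInvariantPartition G 𝓑) : (blockKernel G 𝓑).Normal where
  conj_mem k hk g := mem_blockKernel.mpr fun B hB => by
    rw [mul_smul, mul_smul, mem_blockKernel.mp hk _ (h𝓑.smul_mem g⁻¹ hB), smul_inv_smul]

lemma isBlock (h𝓑 : IsInvariantPartition G 𝓑) (hB : B ∈ 𝓑) : IsBlock G B :=
  isBlock_iff_smul_eq_or_disjoint.mpr fun g =>
    or_iff_not_imp_left.mpr (h𝓑.isPartition.pairwiseDisjoint (h𝓑.smul_mem g hB) hB)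

lemma exists_smul_eq [IsPretransitive G X] (h𝓑 : IsInvariantPartition G 𝓑) (hB : B ∈ 𝓑)
    (hC : C ∈ 𝓑) : ∃ g : G, g • B = C := by
  obtain ⟨x, hx⟩ := Setoid.nonempty_of_mem_partition h𝓑.isPartition hB
  obtain ⟨y, hy⟩ := Setoid.nonempty_of_mem_partition h𝓑.isPartition hC
  obtain ⟨g, rfl⟩ := MulAction.exists_smul_eq G x y
  exact ⟨g, Setoid.eq_of_mem_eqv_class h𝓑.isPartition.2 (h𝓑.smul_mem g hB)
    (Set.smul_mem_smul_set hx) hC hy⟩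

lemma le_blockKernel_of_le_stabilizer [IsPretransitive G X] (h𝓑 : IsInvariantPartition G 𝓑)
    {N : Subgroup G} [hN : N.Normal] (hB : B ∈ 𝓑) (h : N ≤ stabilizer G B) :
    N ≤ blockKernel G 𝓑 := by
  refine le_iInf₂ fun C hC => ?_
  obtain ⟨g, rfl⟩ := h𝓑.exists_smul_eq hB hC
  exact hN.le_stabilizer_smul h g

lemma card_stabilizer [IsPretransitive G X] [IsCancelSMul G X] (h𝓑 : IsInvariantPartition G 𝓑)
    (hB : B ∈ 𝓑) : Nat.card (stabilizer G B) = B.ncard := by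
  obtain ⟨x, hx⟩ := Setoid.nonempty_of_mem_partition h𝓑.isPartition hB
  rw [(h𝓑.isBlock hB).ncard_block_eq_relIndex hx, IsCancelSMul.stabilizer_eq_bot (G := G) x,
    Subgroup.relIndex_bot_left]

lemma card_eq_ncard_mul_ncard [IsPretransitive G X] (h𝓑 : IsInvariantPartition G 𝓑)
    (hB : B ∈ 𝓑) : Nat.card X = B.ncard * 𝓑.ncard := by
  have horbit : orbit G B = 𝓑 := by
    ext C
    exact ⟨fun ⟨g, hg⟩ => hg ▸ h𝓑.smul_mem g hB, fun hC => h𝓑.exists_smul_eq hB hC⟩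
  rw [← (h𝓑.isBlock hB).ncard_block_mul_ncard_orbit_eq
    (Setoid.nonempty_of_mem_partition h𝓑.isPartition hB), horbit]

end IsInvariantPartition

end InvariantPartition

section PermRepresentation

variable {H Ω : Type*} [Group H] (ρ : H →* Equiv.Perm Ω)

lemma isPretransitive_compHom_perm (htrans : ∀ x y : Ω, ∃ σ ∈ ρ.range, σ x = y) :
    letI := MulAction.compHom Ω ρ
    IsPretransitive H Ω := by
  let _ := MulAction.compHom Ω ρ
  refine ⟨fun x y => ?_⟩
  obtain ⟨_, ⟨h, rfl⟩, hxy⟩ := htrans x y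
  exact ⟨h, hxy⟩

lemma isCancelSMul_compHom_perm (hρ : Function.Injective ρ)
    (hfree : ∀ σ ∈ ρ.range, ∀ x : Ω, σ x = x → σ = 1) :
    letI := MulAction.compHom Ω ρ
    IsCancelSMul H Ω := by
  let _ := MulAction.compHom Ω ρ
  exact isCancelSMul_iff_eq_one_of_smul_eq.mpr fun h x hx =>
    hρ ((hfree _ ⟨h, rfl⟩ x hx).trans ρ.map_one.symm)

lemma map_blockKernel_compHom {𝓑 : Set (Set Ω)} {G K : Subgroup (Equiv.Perm Ω)}
    (hρG : ρ.range ≤ G) (hK : ∀ g : Equiv.Perm Ω, g ∈ K ↔ g ∈ G ∧ ∀ B ∈ 𝓑, g '' B = B) :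
    letI := MulAction.compHom Ω ρ
    (blockKernel H 𝓑).map ρ = ρ.range ⊓ K := by
  let _ := MulAction.compHom Ω ρ
  ext σ
  constructor
  · rintro ⟨h, hh, rfl⟩
    exact ⟨⟨h, rfl⟩, (hK _).mpr ⟨hρG ⟨h, rfl⟩, mem_blockKernel.mp hh⟩⟩
  · rintro ⟨⟨h, rfl⟩, hσK⟩
    exact ⟨h, mem_blockKernel.mpr ((hK _).mp hσK).2, rfl⟩

end PermRepresentation

namespace DihedralGroup

section BlockSystem

variable {n : ℕ} {X : Type*} [MulAction (DihedralGroup n) X] [IsPretransitive (DihedralGroup n) X]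
  {𝓑 : Set (Set X)} {B₀ : Set X}

lemma r_mem_blockKernel (h𝓑 : IsInvariantPartition (DihedralGroup n) 𝓑) (hB₀ : B₀ ∈ 𝓑)
    {i : ZMod n} (hi : r i • B₀ = B₀) : r i ∈ blockKernel (DihedralGroup n) 𝓑 :=
  h𝓑.le_blockKernel_of_le_stabilizer hB₀ (Subgroup.zpowers_le.mpr hi) (Subgroup.mem_zpowers _)

lemma six_le_of_two_lt_ncard [IsCancelSMul (DihedralGroup n) X]
    (h𝓑 : IsInvariantPartition (DihedralGroup n) 𝓑) (hB₀ : B₀ ∈ 𝓑) (hsize : B₀.ncard = 4)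
    (hthree : 2 < 𝓑.ncard) : 6 ≤ n := by
  obtain ⟨x, -⟩ := Setoid.nonempty_of_mem_partition h𝓑.isPartition hB₀
  have h := h𝓑.card_eq_ncard_mul_ncard hB₀
  rw [← card_eq_card_of_isCancelSMul (G := DihedralGroup n) x, nat_card, hsize] at h
  omega

lemma exists_zpow_r_one_smul_eq [NeZero n] (h𝓑 : IsInvariantPartition (DihedralGroup n) 𝓑)
    (hB₀ : B₀ ∈ 𝓑) {a : ZMod n} (ha : sr a • B₀ = B₀) {B C : Set X} (hB : B ∈ 𝓑) (hC : C ∈ 𝓑) :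
    ∃ j : ℤ, (r 1 : DihedralGroup n) ^ j • B = C := by
  have hrot : ∀ C ∈ 𝓑, ∃ k : ZMod n, r k • B₀ = C := by
    intro C hC
    obtain ⟨g, rfl⟩ := h𝓑.exists_smul_eq hB₀ hC
    rcases g with i | i
    · exact ⟨i, rfl⟩
    · exact ⟨a - i, by rw [← sr_mul_sr, mul_smul, ha]⟩
  obtain ⟨k, rfl⟩ := hrot B hB
  obtain ⟨l, rfl⟩ := hrot C hC
  refine ⟨((l - k : ZMod n).cast : ℤ), ?_⟩
  rw [r_one_zpow, ZMod.intCast_zmod_cast, smul_smul, r_mul_r, sub_add_cancel]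

variable [NeZero n] [IsCancelSMul (DihedralGroup n) X]

lemma card_blockKernel_eq_two (hn : ¬ n ∣ 4) (h𝓑 : IsInvariantPartition (DihedralGroup n) 𝓑)
    (hB₀ : B₀ ∈ 𝓑) (hsize : B₀.ncard = 4)
    (hsq : ∀ g ∈ blockKernel (DihedralGroup n) 𝓑, g ^ 2 = 1) :
    Nat.card (blockKernel (DihedralGroup n) 𝓑) = 2 := by
  have := h𝓑.blockKernel_normal
  obtain ⟨i, hi0, hi⟩ := exists_r_ne_zero_mem_of_two_lt_card (stabilizer (DihedralGroup n) B₀)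
    (by rw [h𝓑.card_stabilizer hB₀, hsize]; omega)
  have hne : blockKernel (DihedralGroup n) 𝓑 ≠ ⊥ := by
    intro h
    have hiK := r_mem_blockKernel h𝓑 hB₀ hi
    rw [h, Subgroup.mem_bot, one_def, r.injEq] at hiK
    exact hi0 hiK
  have := (Subgroup.one_lt_card_iff_ne_bot _).mpr hne
  have := card_le_two_of_sq_eq_one hn _ hsq
  omega

lemma exists_sr_smul_eq_self (hn : ¬ n ∣ 4) (h𝓑 : IsInvariantPartition (DihedralGroup n) 𝓑)
    (hB₀ : B₀ ∈ 𝓑) (hsize : B₀.ncard = 4)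
    (hsq : ∀ g ∈ blockKernel (DihedralGroup n) 𝓑, g ^ 2 = 1) :
    ∃ a : ZMod n, sr a • B₀ = B₀ := by
  by_contra! hrefl
  have hle : stabilizer (DihedralGroup n) B₀ ≤ blockKernel (DihedralGroup n) 𝓑 := by
    rintro (i | a) hg
    · exact r_mem_blockKernel h𝓑 hB₀ hg
    · exact absurd hg (hrefl a)
  have := Subgroup.card_le_of_le hle
  rw [h𝓑.card_stabilizer hB₀, hsize, card_blockKernel_eq_two hn h𝓑 hB₀ hsize hsq] at this
  omega

end BlockSystem

end DihedralGroup

theorem stmt16_general {Ω : Type*} [Finite Ω] (n : ℕ)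
    (G R K : Subgroup (Equiv.Perm Ω)) (hRG : R ≤ G)
    (hdih : Nonempty (R ≃* DihedralGroup n))
    (hRtrans : ∀ x y : Ω, ∃ d ∈ R, d x = y)
    (hRfree : ∀ d ∈ R, ∀ x : Ω, d x = x → d = 1)
    (𝓑 : Set (Set Ω)) (hpart : Setoid.IsPartition 𝓑)
    (hinv : ∀ g ∈ G, ∀ B ∈ 𝓑, (g : Equiv.Perm Ω) '' B ∈ 𝓑)
    (hsize : ∀ B ∈ 𝓑, B.ncard = 4)
    (hthree : ∃ B₁ ∈ 𝓑, ∃ B₂ ∈ 𝓑, ∃ B₃ ∈ 𝓑, B₁ ≠ B₂ ∧ B₁ ≠ B₃ ∧ B₂ ≠ B₃)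
    (hK : ∀ g : Equiv.Perm Ω, g ∈ K ↔ g ∈ G ∧ ∀ B ∈ 𝓑, g '' B = B)
    (hEA : ∀ g ∈ K, g ^ 2 = 1) :
    Nat.card (R ⊓ K : Subgroup (Equiv.Perm Ω)) = 2 ∧
    ∃ g ∈ G,
      (∀ B₁ ∈ 𝓑, ∀ B₂ ∈ 𝓑, ∃ j : ℤ, (g ^ j) '' B₁ = B₂) ∧
      (∀ j : ℤ, ∀ B ∈ 𝓑, (g ^ j) '' B = B → ∀ C ∈ 𝓑, (g ^ j) '' C = C) := by
  obtain ⟨φ⟩ := hdih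
  let ρ : DihedralGroup n →* Equiv.Perm Ω := R.subtype.comp φ.symm.toMonoidHom
  have hρinj : Function.Injective ρ := R.subtype_injective.comp φ.symm.injective
  have hρR : ρ.range = R := by
    rw [MonoidHom.range_comp, MonoidHom.range_eq_top.mpr φ.symm.surjective,
      ← MonoidHom.range_eq_map, Subgroup.range_subtype]
  let _ : MulAction (DihedralGroup n) Ω := MulAction.compHom Ω ρ
  have := isPretransitive_compHom_perm ρ (hρR ▸ hRtrans)
  have := isCancelSMul_compHom_perm ρ hρinj (hρR ▸ hRfree)
  have h𝓑 : IsInvariantPartition (DihedralGroup n) 𝓑 :=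
    ⟨hpart, fun d _ hB => hinv _ (hRG (φ.symm d).2) _ hB⟩
  have hker := map_blockKernel_compHom ρ (hρR ▸ hRG) hK
  rw [hρR] at hker
  have hsq (d : DihedralGroup n) (hd : d ∈ blockKernel _ 𝓑) : d ^ 2 = 1 :=
    hρinj <| by rw [map_pow, map_one]; exact hEA _ (hker ▸ Subgroup.mem_map_of_mem ρ hd).2
  have h𝓑3 := (Set.two_lt_ncard (Set.toFinite 𝓑)).mpr hthree
  obtain ⟨B₀, hB₀, -⟩ := hthree
  have hn := six_le_of_two_lt_ncard h𝓑 hB₀ (hsize B₀ hB₀) h𝓑3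
  have : NeZero n := ⟨by omega⟩
  have hn4 : ¬ n ∣ 4 := fun h => absurd (Nat.le_of_dvd four_pos h) (by omega)
  obtain ⟨a, ha⟩ := exists_sr_smul_eq_self hn4 h𝓑 hB₀ (hsize B₀ hB₀) hsq
  have hzpow (j : ℤ) (B : Set Ω) : (ρ (r 1) ^ j) '' B = (r 1 ^ j : DihedralGroup n) • B := by
    rw [← map_zpow]; rfl
  refine ⟨?_, ρ (r 1), hRG (φ.symm _).2, fun B₁ hB₁ B₂ hB₂ => ?_,
    fun j B hB hfix C hC => ?_⟩
  · rw [← hker, Subgroup.card_map_of_injective hρinj]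
    exact card_blockKernel_eq_two hn4 h𝓑 hB₀ (hsize B₀ hB₀) hsq
  · simpa only [hzpow] using exists_zpow_r_one_smul_eq h𝓑 hB₀ ha hB₁ hB₂
  · rw [hzpow, r_one_zpow] at hfix ⊢
    exact mem_blockKernel.mp (r_mem_blockKernel h𝓑 hB hfix) C hC

/-- Let `G` be transitive on `Ω` with a regular dihedral subgroup `R`,
let `𝓑` be a minimal block system with at least `3` blocks, each of size `4`, and
suppose the kernel `K` is an elementary abelian `2`-group. Then `R ∩ K ≅ Z₂`
(it has order `2`) and `G/K` acting on `𝓑` contains a regular cyclic subgroup: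
some `g ∈ G` has powers acting transitively on `𝓑`, with any power fixing one block
fixing all blocks (i.e. `G^𝓑` is a c-group of degree `|Ω|/4`). -/
theorem stmt16 {Ω : Type*} [Finite Ω] (n : ℕ) (hn : 1 ≤ n)
    (G R K : Subgroup (Equiv.Perm Ω)) (hRG : R ≤ G)
    (hGtrans : ∀ x y : Ω, ∃ g ∈ G, g x = y)
    (hdih : Nonempty (R ≃* DihedralGroup n))
    (hRtrans : ∀ x y : Ω, ∃ d ∈ R, d x = y)
    (hRfree : ∀ d ∈ R, ∀ x : Ω, d x = x → d = 1)
    (𝓑 : Set (Set Ω)) (hpart : Setoid.IsPartition 𝓑)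
    (hinv : ∀ g ∈ G, ∀ B ∈ 𝓑, (g : Equiv.Perm Ω) '' B ∈ 𝓑)
    (hmin : ∀ B ∈ 𝓑,
      (∀ x ∈ B, ∀ y ∈ B, ∃ g ∈ G, (g : Equiv.Perm Ω) '' B = B ∧ g x = y) ∧
      (∀ C ⊆ B, (∀ g ∈ G, (g : Equiv.Perm Ω) '' B = B →
          ((g : Equiv.Perm Ω) '' C = C ∨ Disjoint ((g : Equiv.Perm Ω) '' C) C)) →
        C.Subsingleton ∨ C = B))
    (hsize : ∀ B ∈ 𝓑, B.ncard = 4)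
    (hthree : ∃ B₁ ∈ 𝓑, ∃ B₂ ∈ 𝓑, ∃ B₃ ∈ 𝓑, B₁ ≠ B₂ ∧ B₁ ≠ B₃ ∧ B₂ ≠ B₃)
    (hK : ∀ g : Equiv.Perm Ω, g ∈ K ↔ g ∈ G ∧ ∀ B ∈ 𝓑, g '' B = B)
    (hEA : ∀ g ∈ K, g ^ 2 = 1) :
    Nat.card (R ⊓ K : Subgroup (Equiv.Perm Ω)) = 2 ∧
    ∃ g ∈ G,
      (∀ B₁ ∈ 𝓑, ∀ B₂ ∈ 𝓑, ∃ j : ℤ, (g ^ j) '' B₁ = B₂) ∧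
      (∀ j : ℤ, ∀ B ∈ 𝓑, (g ^ j) '' B = B → ∀ C ∈ 𝓑, (g ^ j) '' C = C) :=
  stmt16_general n G R K hRG hdih hRtrans hRfree 𝓑 hpart hinv hsize hthree hK hEA
end

section
/- Let p ≡ 3 (mod 4) be a prime, Δ = {1,…,p}, G = Sym(Δ) × ⟨c⟩ with |c| = 2, H = Alt(Δ \ {1}) ≅ A_{p−1}, and Ω = [G : H] of size 4p. Let D = ⟨(1 2 … p), (2,p)(3,p−1)⋯((p+1)/2,(p+3)/2)⟩ × ⟨c⟩. Then D ≅ D_{2p} × Z₂ ≅ D_{4p}, D ∩ H = 1, |D| = |G : H| = 4p, and hence D acts regularly on Ω, so G is a d-group of degree 4p. -/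
/-! The maps `x ↦ x + 1` and `x ↦ -x` generate a faithful copy of `D_{2p}` in `Sym(ZMod p)`,
whose only nontrivial element fixing `0` is `x ↦ -x`. That element is a product of `(p - 1) / 2`
transpositions, hence odd when `p ≡ 3 (mod 4)`, so `D ∩ H = 1`. Since also `|D| = 4p = |G : H|`,
`D` is a complement of `H`, which is the same as acting regularly on the cosets of `H`.
The Chinese remainder theorem `ZMod (2p) ≃ ZMod 2 × ZMod p` gives `D_{4p} ≅ D_{2p} × Z₂`. -/

open Equiv Equiv.Perm MulAction

namespace DihedralGroup

theorem closure_r_one_sr_zero (n : ℕ) :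
    Subgroup.closure {r (1 : ZMod n), sr 0} = ⊤ := by
  have hr : ∀ i : ZMod n, r i ∈ Subgroup.closure {r (1 : ZMod n), sr 0} := fun i => by
    rw [← ZMod.intCast_zmod_cast i, ← r_one_zpow]
    exact zpow_mem (Subgroup.subset_closure (by simp)) _
  rw [eq_top_iff]
  rintro (i | i) -
  · exact hr i
  · rw [← zero_add i, ← sr_mul_r]
    exact mul_mem (Subgroup.subset_closure (by simp)) (hr i)

def toPerm (n : ℕ) : DihedralGroup n →* Perm (ZMod n) where
  toFun
    | r i => Equiv.addLeft i
    | sr i => Equiv.neg (ZMod n) * Equiv.addLeft i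
  map_one' := by
    show Equiv.addLeft (0 : ZMod n) = 1
    ext x; simp
  map_mul' := by
    rintro (i | i) (j | j) <;> ext x <;> simp [Perm.mul_apply] <;> ring

@[simp] theorem toPerm_r (n : ℕ) (i : ZMod n) : toPerm n (r i) = Equiv.addLeft i := rfl

@[simp] theorem toPerm_sr (n : ℕ) (i : ZMod n) :
    toPerm n (sr i) = Equiv.neg (ZMod n) * Equiv.addLeft i := rfl

theorem toPerm_injective (n : ℕ) [Fact (2 < n)] : Function.Injective (toPerm n) := by
  rw [injective_iff_map_eq_one]
  rintro (i | i) h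
  · rw [show i = 0 by simpa using DFunLike.congr_fun h 0, r_zero]
  · have h0 := DFunLike.congr_fun h 0
    have h1 := DFunLike.congr_fun h 1
    simp only [toPerm_sr, Perm.mul_apply, Equiv.coe_addLeft, Equiv.neg_apply, add_zero,
      neg_eq_zero, Perm.one_apply] at h0 h1
    rw [h0, zero_add] at h1
    exact absurd h1 ZMod.neg_one_ne_one

theorem range_toPerm (n : ℕ) :
    (toPerm n).range = Subgroup.closure {Equiv.addLeft (1 : ZMod n), Equiv.neg (ZMod n)} := by
  rw [MonoidHom.range_eq_map, ← closure_r_one_sr_zero, MonoidHom.map_closure,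
    Set.image_pair, toPerm_r, toPerm_sr, Equiv.addLeft_zero, mul_one]

def map {m n : ℕ} (f : ZMod m →+ ZMod n) : DihedralGroup m →* DihedralGroup n where
  toFun
    | r i => r (f i)
    | sr i => sr (f i)
  map_one' := congrArg r (map_zero f)
  map_mul' := by
    rintro (i | i) (j | j) <;>
      simp only [r_mul_r, r_mul_sr, sr_mul_r, sr_mul_sr, map_add, map_sub]

/-- A homomorphism because `-1 = 1` in `ZMod 2`. -/
def indexParity {m : ℕ} (hm : 2 ∣ m) : DihedralGroup m →* Multiplicative (ZMod 2) where
  toFun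
    | r i => .ofAdd (ZMod.castHom hm (ZMod 2) i)
    | sr i => .ofAdd (ZMod.castHom hm (ZMod 2) i)
  map_one' := by simp only [one_def, map_zero, ofAdd_zero]
  map_mul' := by
    rintro (i | i) (j | j) <;>
      simp only [r_mul_r, r_mul_sr, sr_mul_r, sr_mul_sr, map_add, map_sub, CharTwo.sub_eq_add,
        ofAdd_add, mul_comm]

theorem bijective_map_prod_indexParity {n : ℕ} (hn : Odd n) :
    Function.Bijective
      ((map (ZMod.castHom (dvd_mul_left n 2) (ZMod n)).toAddMonoidHom).prod
        (indexParity (dvd_mul_right 2 n))) := by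
  have : NeZero n := ⟨hn.pos.ne'⟩
  have hcast : Function.Injective ((ZMod.castHom (dvd_mul_right 2 n) (ZMod 2)).prod
      (ZMod.castHom (dvd_mul_left n 2) (ZMod n))) := by
    rw [RingHom.ext_zmod (RingHom.prod _ _)
      (ZMod.chineseRemainder (Nat.coprime_two_left.mpr hn)).toRingHom]
    exact (ZMod.chineseRemainder _).injective
  rw [Fintype.bijective_iff_injective_and_card, Fintype.card_prod, card, card,
    Fintype.card_multiplicative, ZMod.card]
  refine ⟨?_, by ring⟩
  rintro (i | i) (j | j) h <;>
    simp only [map, indexParity, MonoidHom.prod_apply, MonoidHom.coe_mk, OneHom.coe_mk,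
      RingHom.toAddMonoidHom_eq_coe, AddMonoidHom.coe_coe, Prod.mk.injEq, r.injEq, sr.injEq,
      EmbeddingLike.apply_eq_iff_eq, reduceCtorEq, false_and] at h
  · exact congrArg r (hcast (Prod.ext h.2 h.1))
  · exact congrArg sr (hcast (Prod.ext h.2 h.1))

noncomputable def mulEquivProdOfOdd {n : ℕ} (hn : Odd n) :
    DihedralGroup (2 * n) ≃* DihedralGroup n × Multiplicative (ZMod 2) :=
  MulEquiv.ofBijective _ (bijective_map_prod_indexParity hn)

end DihedralGroup

theorem Equiv.Perm.sign_neg_zmod {n : ℕ} [NeZero n] (hn : Odd n) :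
    sign (Equiv.neg (ZMod n)) = (-1) ^ (n / 2) := by
  have hfix : Function.fixedPoints (Equiv.neg (ZMod n)) = {0} := by
    ext x
    simp only [Function.mem_fixedPoints, Function.IsFixedPt, Equiv.neg_apply,
      ZMod.neg_eq_self_iff, Set.mem_singleton_iff, or_iff_left_iff_imp]
    rintro h
    exact absurd ⟨x.val, by omega⟩ (Nat.not_even_iff_odd.mpr hn)
  rw [sign_of_pow_two_eq_one (by ext x; simp [sq]), ZMod.card, ← Nat.card_eq_fintype_card,
    hfix, Nat.card_unique]
  obtain ⟨k, rfl⟩ := hn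
  congr 1
  omega

theorem Subgroup.index_alternatingGroup_inf_stabilizer {α : Type*} [Fintype α]
    [DecidableEq α] (a : α) (h : 2 < Fintype.card α) :
    (alternatingGroup α ⊓ stabilizer (Perm α) a).index = 2 * Fintype.card α := by
  obtain ⟨b, hb, c, hc, hbc⟩ : ∃ b ∈ ({a}ᶜ : Finset α), ∃ c ∈ ({a}ᶜ : Finset α), b ≠ c :=
    Finset.one_lt_card.mp (by rw [Finset.card_compl, Finset.card_singleton]; omega)
  set S := stabilizer (Perm α) a
  have hsurj : (sign.comp S.subtype).range = ⊤ := by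
    rw [eq_top_iff]
    intro u _
    obtain rfl | rfl := Int.units_eq_one_or u
    · exact one_mem _
    · refine ⟨⟨swap b c, ?_⟩, sign_swap hbc⟩
      rw [Finset.mem_compl, Finset.mem_singleton] at hb hc
      exact mem_stabilizer_iff.mpr (swap_apply_of_ne_of_ne (Ne.symm hb) (Ne.symm hc))
  rw [← relIndex_mul_index inf_le_right, inf_relIndex_right, relIndex, alternatingGroup,
    subgroupOf, MonoidHom.comap_ker, index_ker, hsurj, index_stabilizer_of_transitive,
    Subgroup.card_top, Nat.card_eq_fintype_card, Nat.card_eq_fintype_card,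
    Fintype.card_units_int]

theorem Subgroup.prod_inf_prod {G N : Type*} [Group G] [Group N] (H₁ H₂ : Subgroup G)
    (K₁ K₂ : Subgroup N) : H₁.prod K₁ ⊓ H₂.prod K₂ = (H₁ ⊓ H₂).prod (K₁ ⊓ K₂) :=
  SetLike.ext fun _ => and_and_and_comm

section Complement

variable {G : Type*} [Group G] {D H : Subgroup G}

theorem Subgroup.isComplement'_of_inf_eq_bot_of_card_eq_index [Finite G] (hDH : D ⊓ H = ⊥)
    (hcard : Nat.card D = H.index) : D.IsComplement' H :=
  isComplement'_of_card_mul_and_disjoint (by rw [hcard, mul_comm, card_mul_index])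
    (disjoint_iff.mpr hDH)

theorem Subgroup.IsComplement'.exists_smul_eq_s19 (h : D.IsComplement' H) (x y : G ⧸ H) :
    ∃ d ∈ D, d • x = y := by
  have hmk := isComplement_subgroup_right_iff_existsUnique_quotientGroupMk.mp h
  obtain ⟨⟨d₁, hd₁⟩, rfl, -⟩ := hmk x
  obtain ⟨⟨d₂, hd₂⟩, rfl, -⟩ := hmk y
  refine ⟨d₂ * d₁⁻¹, mul_mem hd₂ (inv_mem hd₁), ?_⟩
  show (d₂ * d₁⁻¹) • (d₁ : G ⧸ H) = d₂
  rw [MulAction.Quotient.smul_mk, smul_eq_mul, inv_mul_cancel_right]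

theorem Subgroup.IsComplement'.eq_one_of_smul_eq_s19 (h : D.IsComplement' H) {d : G} (hd : d ∈ D)
    (x : G ⧸ H) (hdx : d • x = x) : d = 1 := by
  obtain ⟨⟨d₁, hd₁⟩, rfl, huniq⟩ :=
    isComplement_subgroup_right_iff_existsUnique_quotientGroupMk.mp h x
  have := huniq ⟨d * d₁, mul_mem hd hd₁⟩ hdx
  simpa using congrArg Subtype.val this

end Complement

theorem closure_addLeft_neg_inf_alternatingGroup_inf_stabilizer {n : ℕ} [NeZero n]
    (hn : n % 4 = 3) :
    Subgroup.closure {Equiv.addLeft (1 : ZMod n), Equiv.neg (ZMod n)} ⊓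
      (alternatingGroup (ZMod n) ⊓ stabilizer (Perm (ZMod n)) (0 : ZMod n)) = ⊥ := by
  have : Fact (2 < n) := ⟨by omega⟩
  rw [← DihedralGroup.range_toPerm, eq_bot_iff]
  rintro _ ⟨⟨i | i, rfl⟩, heven : _ ∈ alternatingGroup _, hfix : _ • _ = _⟩ <;>
    rw [Perm.smul_def] at hfix
  · rw [show i = 0 by simpa using hfix]
    simp
  · rw [show i = 0 by simpa using hfix, DihedralGroup.toPerm_sr, Equiv.addLeft_zero, mul_one,
      mem_alternatingGroup, sign_neg_zmod (Nat.odd_iff.mpr (by omega)),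
      Odd.neg_one_pow (Nat.odd_iff.mpr (by omega))] at heven
    exact absurd heven (by decide)

theorem stmt19_general (p : ℕ) [NeZero p] (hp4 : p % 4 = 3)
    (H D : Subgroup (Equiv.Perm (ZMod p) × Multiplicative (ZMod 2)))
    (hH : ∀ x : Equiv.Perm (ZMod p) × Multiplicative (ZMod 2),
      x ∈ H ↔ x.2 = 1 ∧ x.1 0 = 0 ∧ x.1 ∈ alternatingGroup (ZMod p))
    (hD : D = (Subgroup.closure
      {Equiv.addLeft (1 : ZMod p), Equiv.neg (ZMod p)}).prod ⊤) :
    Nonempty (D ≃* DihedralGroup p × Multiplicative (ZMod 2)) ∧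
    Nonempty (D ≃* DihedralGroup (2 * p)) ∧
    D ⊓ H = ⊥ ∧
    Nat.card D = 4 * p ∧
    Nat.card ((Equiv.Perm (ZMod p) × Multiplicative (ZMod 2)) ⧸ H) = 4 * p ∧
    (∀ x y : (Equiv.Perm (ZMod p) × Multiplicative (ZMod 2)) ⧸ H,
      ∃ d ∈ D, d • x = y) ∧
    (∀ d ∈ D, ∀ x : (Equiv.Perm (ZMod p) × Multiplicative (ZMod 2)) ⧸ H,
      d • x = x → d = 1) := by
  have : Fact (2 < p) := ⟨by omega⟩
  have hodd : Odd p := Nat.odd_iff.mpr (by omega)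
  have hH_eq :
      H = (alternatingGroup (ZMod p) ⊓ stabilizer (Perm (ZMod p)) (0 : ZMod p)).prod ⊥ := by
    ext x
    simp [hH, Subgroup.mem_prod, mem_stabilizer_iff, and_comm]
  let eD : D ≃* DihedralGroup p × Multiplicative (ZMod 2) :=
    (MulEquiv.subgroupCongr hD).trans <| (Subgroup.prodEquiv _ _).trans <|
      ((MulEquiv.subgroupCongr (DihedralGroup.range_toPerm p).symm).trans
        (MonoidHom.ofInjective (DihedralGroup.toPerm_injective p)).symm).prodCongr
      Subgroup.topEquiv
  have hDH : D ⊓ H = ⊥ := by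
    rw [hD, hH_eq, Subgroup.prod_inf_prod,
      closure_addLeft_neg_inf_alternatingGroup_inf_stabilizer hp4, inf_bot_eq,
      Subgroup.bot_prod_bot]
  have hcard : Nat.card D = 4 * p := by
    rw [Nat.card_congr eD.toEquiv, Nat.card_prod, DihedralGroup.nat_card,
      Nat.card_eq_fintype_card, Fintype.card_multiplicative, ZMod.card]
    ring
  have hindex : H.index = 4 * p := by
    rw [hH_eq, Subgroup.index_prod,
      Subgroup.index_alternatingGroup_inf_stabilizer _ (by rw [ZMod.card]; omega),
      Subgroup.index_bot, Nat.card_eq_fintype_card, Fintype.card_multiplicative, ZMod.card,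
      ZMod.card]
    ring
  have hcompl :=
    Subgroup.isComplement'_of_inf_eq_bot_of_card_eq_index hDH (hcard.trans hindex.symm)
  exact ⟨⟨eD⟩, ⟨eD.trans (DihedralGroup.mulEquivProdOfOdd hodd).symm⟩, hDH, hcard, hindex,
    hcompl.exists_smul_eq_s19, fun d hd => hcompl.eq_one_of_smul_eq_s19 hd⟩

/-- Let `p ≡ 3 (mod 4)` be prime, `Δ = Z_p`, `G = Sym(Δ) × ⟨c⟩` with
`|c| = 2`, `H` the subgroup of pairs `(σ, 1)` with `σ` an even permutation fixing the
point `0` (so `H ≅ A_{p−1}`), and `D = ⟨x ↦ x+1, x ↦ −x⟩ × ⟨c⟩`. Then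
`D ≅ D_{2p} × Z₂ ≅ D_{4p}`, `D ∩ H = 1`, `|D| = |G : H| = 4p`, and `D` acts
regularly on `Ω = [G : H]`, so `G` is a d-group of degree `4p`. -/
theorem stmt19 (p : ℕ) [NeZero p] (hp : p.Prime) (hp4 : p % 4 = 3)
    (H D : Subgroup (Equiv.Perm (ZMod p) × Multiplicative (ZMod 2)))
    (hH : ∀ x : Equiv.Perm (ZMod p) × Multiplicative (ZMod 2),
      x ∈ H ↔ x.2 = 1 ∧ x.1 0 = 0 ∧ x.1 ∈ alternatingGroup (ZMod p))
    (hD : D = (Subgroup.closure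
      {Equiv.addLeft (1 : ZMod p), Equiv.neg (ZMod p)}).prod ⊤) :
    Nonempty (D ≃* DihedralGroup p × Multiplicative (ZMod 2)) ∧
    Nonempty (D ≃* DihedralGroup (2 * p)) ∧
    D ⊓ H = ⊥ ∧
    Nat.card D = 4 * p ∧
    Nat.card ((Equiv.Perm (ZMod p) × Multiplicative (ZMod 2)) ⧸ H) = 4 * p ∧
    (∀ x y : (Equiv.Perm (ZMod p) × Multiplicative (ZMod 2)) ⧸ H,
      ∃ d ∈ D, d • x = y) ∧
    (∀ d ∈ D, ∀ x : (Equiv.Perm (ZMod p) × Multiplicative (ZMod 2)) ⧸ H,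
      d • x = x → d = 1) :=
  stmt19_general p hp4 H D hH hD
end
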